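/- arXiv:0903.4628 — 4 statements merged into one kernel-verified Lean document; each statement's English description precedes it below -/
import Mathlib

section
/- The number of Gelfand–Tsetlin patterns with n rows and bottom row (k_1,…,k_n), i.e. triangular arrays (a_{i,j})_{1≤i≤j≤n} of integers with a_{i,j} ≤ a_{i-1,j} ≤ a_{i,j+1} for all valid indices and a_{1,j}=k_j, equals ∏_{1≤i<j≤n} (k_j - k_i + j - i)/(j - i), for any weakly increasing integer sequence k_1 ≤ k_2 ≤ … ≤ k_n. -/
/-!
Removing the bottom row `k ∈ ℤ^(n+1)` of a Gelfand–Tsetlin pattern leaves a pattern with `n` rows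
whose bottom row `m` interlaces `k` (`k j ≤ m j ≤ k (j + 1)`), and conversely. Writing `Δ` for the
Vandermonde product and `ρ j = j`, the claim is `#GT(k) · Δ(ρ) = Δ(k + ρ)`, and by this recursion
it reduces to the identity `n! · ∑_{μ j ∈ (l j, l (j + 1)]} Δ(μ) = Δ(l)` for monotone `l`.
That identity is a discrete integration of the Vandermonde determinant: in the basis of falling
factorials `x^(i)`, differences of adjacent columns of `det (l j + 1)^(i)` are
`(i + 1) · ∑_{x ∈ (a, b]} x^(i)`, and multilinearity expands the resulting determinant
into `∑_μ Δ(μ)`.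
-/

/-- A Gelfand–Tsetlin pattern with n rows, encoded 0-based: row i (i = 0 is the bottom row)
consists of the entries `a i j` with i ≤ j ≤ n-1.  Each entry is weakly between its
southwest and southeast neighbours: a i (j-1) ≤ a (i+1) j ≤ a i j.  Entries outside the
triangular array are normalized to 0. -/
def IsGTPattern (n : ℕ) (k : Fin n → ℤ) (a : ℕ → ℕ → ℤ) : Prop :=
  (∀ i j : ℕ, ¬(i ≤ j ∧ j < n) → a i j = 0) ∧
  (∀ j : Fin n, a 0 (j : ℕ) = k j) ∧
  (∀ i j : ℕ, i + 1 ≤ j → j ≤ n - 1 → a i (j - 1) ≤ a (i + 1) j ∧ a (i + 1) j ≤ a i j)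

open Finset Matrix Polynomial
open scoped Nat

theorem descPochhammer_eval_add_one_sub {R : Type*} [CommRing R] (i : ℕ) (x : R) :
    (descPochhammer R (i + 1)).eval (x + 1) - (descPochhammer R (i + 1)).eval x
      = (i + 1) * (descPochhammer R i).eval x := by
  rw [descPochhammer_succ_eval i x, descPochhammer_succ_left]
  simp only [eval_mul, eval_X, eval_comp, eval_sub, eval_one, add_sub_cancel_right]
  ring

theorem mul_sum_Ioc_descPochhammer_eval (i : ℕ) {a b : ℤ} (hab : a ≤ b) :
    (i + 1) * ∑ x ∈ Ioc a b, (descPochhammer ℤ i).eval x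
      = (descPochhammer ℤ (i + 1)).eval (b + 1) - (descPochhammer ℤ (i + 1)).eval (a + 1) := by
  induction b, hab using Int.leInduction with
  | base => simp
  | succ b hab ih =>
    rw [← insert_Ioc_right_eq_Ioc_add_one hab, sum_insert (by simp), mul_add, ih,
      ← descPochhammer_eval_add_one_sub]
    ring

theorem det_descPochhammer_eval {R : Type*} [CommRing R] [IsDomain R] {n : ℕ} (v : Fin n → R) :
    (of fun i j : Fin n => (descPochhammer R i).eval (v j)).det = (vandermonde v).det := by
  rw [det_eval_matrixOfPolynomials_eq_det_vandermonde v (fun i => descPochhammer R i)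
    (fun i => descPochhammer_natDegree R i) (fun i => monic_descPochhammer R i),
    ← det_transpose]
  rfl

theorem det_of_sum_columns {R ι : Type*} [CommRing R] {n : ℕ} (s : Fin n → Finset ι)
    (f : ι → Fin n → R) :
    (of fun i j => ∑ x ∈ s j, f x i).det
      = ∑ μ ∈ Fintype.piFinset s, (of fun i j => f (μ j) i).det := by
  rw [← det_transpose]
  simp_rw [← det_transpose (of fun i j => f _ i)]
  convert (detRowAlternating : (Fin n → R) [⋀^Fin n]→ₗ[R] R).map_sum_finset (fun _ x => f x) s
    using 1
  · exact congrArg det (by ext; simp [Finset.sum_apply])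
  · rfl

theorem det_eq_det_sub_of_row_zero_eq_one {R : Type*} [CommRing R] {n : ℕ}
    (A : Matrix (Fin (n + 1)) (Fin (n + 1)) R) (hA : ∀ j, A 0 j = 1) :
    A.det = (of fun i j : Fin n => A i.succ j.succ - A i.succ j.castSucc).det := by
  rw [det_eq_of_forall_col_eq_smul_add_pred (A := A)
      (B := of fun i j => Fin.cases (A i 0) (fun j => A i j.succ - A i j.castSucc) j)
      (fun _ => 1) (fun _ => rfl) (fun _ _ => by simp),
    det_succ_row_zero, Fin.sum_univ_succ]
  simp [hA]
  rfl

theorem factorial_mul_sum_det_vandermonde {n : ℕ} (l : Fin (n + 1) → ℤ) (hl : Monotone l) :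
    n ! * ∑ μ ∈ Fintype.piFinset (fun j : Fin n => Ioc (l j.castSucc) (l j.succ)),
      (vandermonde μ).det = (vandermonde l).det := by
  have hcol (i j : Fin n) :
      (i + 1) * ∑ x ∈ Ioc (l j.castSucc) (l j.succ), (descPochhammer ℤ i).eval x
        = (descPochhammer ℤ (i + 1)).eval (l j.succ + 1)
          - (descPochhammer ℤ (i + 1)).eval (l j.castSucc + 1) :=
    mul_sum_Ioc_descPochhammer_eval i (hl j.castSucc_le_succ)
  have hfact : ∏ i : Fin n, ((i : ℤ) + 1) = n ! := by
    rw [← prod_range_add_one_eq_factorial, Fin.prod_univ_eq_prod_range (fun i => (i : ℤ) + 1)]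
    push_cast
    rfl
  calc
    _ = (∏ i : Fin n, ((i : ℤ) + 1)) *
          (of fun i j : Fin n => ∑ x ∈ Ioc (l j.castSucc) (l j.succ),
            (descPochhammer ℤ i).eval x).det := by
      rw [hfact, det_of_sum_columns]
      simp only [det_descPochhammer_eval]
    _ = (of fun i j : Fin n => (descPochhammer ℤ (i + 1)).eval (l j.succ + 1)
          - (descPochhammer ℤ (i + 1)).eval (l j.castSucc + 1)).det := by
      rw [← det_mul_column]
      simp_rw [of_apply, hcol]
    _ = (of fun i j : Fin (n + 1) => (descPochhammer ℤ i).eval (l j + 1)).det := by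
      rw [det_eq_det_sub_of_row_zero_eq_one _ fun _ => by simp]
      simp only [of_apply, Fin.val_succ]
    _ = (vandermonde l).det := by
      rw [det_descPochhammer_eval, det_vandermonde_add]

theorem det_vandermonde_id_succ (n : ℕ) :
    (vandermonde fun i : Fin (n + 1) => (i : ℤ)).det
      = n ! * (vandermonde fun i : Fin n => (i : ℤ)).det := by
  cases n with
  | zero => simp
  | succ n => simp [det_vandermonde_id_eq_superFactorial, Nat.superFactorial_succ]

theorem cast_det_vandermonde_eq_prod {n : ℕ} (v : Fin n → ℤ) :
    ((vandermonde v).det : ℚ)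
      = ∏ p ∈ univ.filter (fun p : Fin n × Fin n => p.1 < p.2), ((v p.2 : ℚ) - v p.1) := by
  rw [det_vandermonde, prod_filter, Fintype.prod_prod_type]
  simp [prod_ite, filter_lt_eq_Ioi]

theorem isGTPattern_iff {n : ℕ} {k : Fin n → ℤ} {a : ℕ → ℕ → ℤ} :
    IsGTPattern n k a ↔
      (∀ i j, ¬(i ≤ j ∧ j < n) → a i j = 0) ∧ (∀ j : Fin n, a 0 j = k j) ∧
      ∀ i j, i ≤ j → j + 2 ≤ n → a i j ≤ a (i + 1) (j + 1) ∧ a (i + 1) (j + 1) ≤ a i (j + 1) := by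
  refine and_congr_right fun _ => and_congr_right fun _ =>
    ⟨fun h i j hij hjn => ?_, fun h i j hij hjn => ?_⟩
  · simpa using h i (j + 1) (by omega) (by omega)
  · obtain ⟨j, rfl⟩ := Nat.exists_eq_add_of_lt hij
    simpa using h i (i + j) (by omega) (by omega)

theorem isGTPattern_zero_iff {k : Fin 0 → ℤ} {a : ℕ → ℕ → ℤ} : IsGTPattern 0 k a ↔ a = 0 :=
  ⟨fun h => funext₂ fun i j => h.1 i j (by omega),
    by rintro rfl; exact ⟨fun _ _ _ => rfl, finZeroElim, fun _ _ _ _ => by omega⟩⟩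

noncomputable def interlacingRows {n : ℕ} (k : Fin (n + 1) → ℤ) : Finset (Fin n → ℤ) :=
  Fintype.piFinset fun j => Icc (k j.castSucc) (k j.succ)

theorem mem_interlacingRows {n : ℕ} {k : Fin (n + 1) → ℤ} {m : Fin n → ℤ} :
    m ∈ interlacingRows k ↔ ∀ j, k j.castSucc ≤ m j ∧ m j ≤ k j.succ := by
  simp [interlacingRows]

theorem Monotone.of_mem_interlacingRows {n : ℕ} {k : Fin (n + 1) → ℤ} {m : Fin n → ℤ}
    (hk : Monotone k) (hm : m ∈ interlacingRows k) : Monotone m := by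
  rw [mem_interlacingRows] at hm
  intro i j hij
  rcases hij.eq_or_lt with rfl | hij
  · rfl
  · exact (hm i).2.trans ((hk (Fin.succ_le_castSucc_iff.mpr hij)).trans (hm j).1)

theorem sum_interlacingRows_det_vandermonde {n : ℕ} (k : Fin (n + 1) → ℤ) :
    ∑ m ∈ interlacingRows k, (vandermonde fun j => m j + j).det
      = ∑ μ ∈ Fintype.piFinset fun j : Fin n =>
          Ioc (k j.castSucc + j.castSucc) (k j.succ + j.succ), (vandermonde μ).det := by
  refine sum_nbij' (fun m j => m j + j + 1) (fun μ j => μ j - j - 1) ?_ ?_ ?_ ?_ ?_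
  · intro m hm
    simp only [mem_interlacingRows, Fintype.mem_piFinset, mem_Ioc, Fin.val_succ,
      Fin.val_castSucc] at hm ⊢
    intro j
    have := hm j
    push_cast
    omega
  · intro μ hμ
    simp only [mem_interlacingRows, Fintype.mem_piFinset, mem_Ioc, Fin.val_succ,
      Fin.val_castSucc] at hμ ⊢
    intro j
    have := hμ j
    push_cast at this
    omega
  · intro m _
    funext j
    ring
  · intro μ _
    funext j
    ring
  · intro m _
    exact (det_vandermonde_add _ 1).symm

namespace GTPattern

def dropBottomRow (a : ℕ → ℕ → ℤ) : ℕ → ℕ → ℤ := fun i j => a (i + 1) (j + 1)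

def consBottomRow {n : ℕ} (k : Fin (n + 1) → ℤ) (b : ℕ → ℕ → ℤ) : ℕ → ℕ → ℤ
  | 0, j => if h : j < n + 1 then k ⟨j, h⟩ else 0
  | _ + 1, 0 => 0
  | i + 1, j + 1 => b i j

end GTPattern

namespace IsGTPattern

variable {n : ℕ} {k : Fin (n + 1) → ℤ} {a : ℕ → ℕ → ℤ}

theorem secondRow_mem_interlacingRows (ha : IsGTPattern (n + 1) k a) :
    (fun j : Fin n => a 1 (j + 1)) ∈ interlacingRows k := by
  obtain ⟨-, hrow, hint⟩ := isGTPattern_iff.mp ha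
  refine mem_interlacingRows.mpr fun j => ?_
  have hleft : a 0 j = k j.castSucc := hrow j.castSucc
  have hright : a 0 (j + 1) = k j.succ := hrow j.succ
  simpa [hleft, hright] using hint 0 j (Nat.zero_le _) (by omega)

theorem dropBottomRow (ha : IsGTPattern (n + 1) k a) :
    IsGTPattern n (fun j : Fin n => a 1 (j + 1)) (GTPattern.dropBottomRow a) := by
  obtain ⟨hzero, -, hint⟩ := isGTPattern_iff.mp ha
  exact isGTPattern_iff.mpr ⟨fun i j hij => hzero _ _ (by omega), fun _ => rfl,
    fun i j hij hjn => hint (i + 1) (j + 1) (by omega) (by omega)⟩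

theorem consBottomRow {m : Fin n → ℤ} {b : ℕ → ℕ → ℤ} (hm : m ∈ interlacingRows k)
    (hb : IsGTPattern n m b) : IsGTPattern (n + 1) k (GTPattern.consBottomRow k b) := by
  obtain ⟨hzero, hrow, hint⟩ := isGTPattern_iff.mp hb
  rw [mem_interlacingRows] at hm
  refine isGTPattern_iff.mpr ⟨?_, fun j => dif_pos j.isLt, ?_⟩
  · rintro (_ | i) (_ | j) hij
    · omega
    · exact dif_neg (by omega)
    · rfl
    · exact hzero i j (by omega)
  · rintro (_ | i) j hij hjn
    · have hj : j < n := by omega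
      have := hm ⟨j, hj⟩
      rw [← hrow] at this
      simpa [GTPattern.consBottomRow, hj, hj.le] using this
    · obtain ⟨j, rfl⟩ := Nat.exists_eq_add_of_lt hij
      exact hint i (i + j) (by omega) (by omega)

end IsGTPattern

theorem GTPattern.consBottomRow_dropBottomRow {n : ℕ} {k : Fin (n + 1) → ℤ} {a : ℕ → ℕ → ℤ}
    (ha : IsGTPattern (n + 1) k a) : consBottomRow k (dropBottomRow a) = a := by
  obtain ⟨hzero, hrow, -⟩ := ha
  funext i j
  rcases i with _ | i
  · by_cases hj : j < n + 1
    · exact (dif_pos hj).trans (hrow ⟨j, hj⟩).symm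
    · exact (dif_neg hj).trans (hzero 0 j (by omega)).symm
  · rcases j with _ | j
    · exact (hzero _ 0 (by omega)).symm
    · rfl

noncomputable def isGTPatternSuccEquiv {n : ℕ} (k : Fin (n + 1) → ℤ) :
    {a // IsGTPattern (n + 1) k a} ≃ Σ m : interlacingRows k, {b // IsGTPattern n m b} where
  toFun a := ⟨⟨_, a.2.secondRow_mem_interlacingRows⟩, ⟨_, a.2.dropBottomRow⟩⟩
  invFun p := ⟨GTPattern.consBottomRow k p.2.1, p.2.2.consBottomRow p.1.2⟩
  left_inv a := Subtype.ext (GTPattern.consBottomRow_dropBottomRow a.2)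
  right_inv := by
    rintro ⟨⟨m, hm⟩, ⟨b, hb⟩⟩
    obtain rfl : m = fun j : Fin n => b 0 j := funext fun j => (hb.2.1 j).symm
    rfl

theorem finite_isGTPattern (n : ℕ) (k : Fin n → ℤ) : Finite {a // IsGTPattern n k a} := by
  induction n with
  | zero => simp_rw [isGTPattern_zero_iff]; infer_instance
  | succ n ih => exact Finite.of_equiv _ (isGTPatternSuccEquiv k).symm

theorem card_isGTPattern_zero (k : Fin 0 → ℤ) : Nat.card {a // IsGTPattern 0 k a} = 1 := by
  simp_rw [isGTPattern_zero_iff]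
  exact Nat.card_unique

theorem card_isGTPattern_succ {n : ℕ} (k : Fin (n + 1) → ℤ) :
    Nat.card {a // IsGTPattern (n + 1) k a}
      = ∑ m ∈ interlacingRows k, Nat.card {b // IsGTPattern n m b} := by
  have := fun m => finite_isGTPattern n m
  rw [Nat.card_congr (isGTPatternSuccEquiv k), Nat.card_sigma,
    sum_coe_sort (interlacingRows k) fun m => Nat.card {b // IsGTPattern n m b}]

theorem card_isGTPattern_mul_det_vandermonde (n : ℕ) (k : Fin n → ℤ) (hk : Monotone k) :
    Nat.card {a // IsGTPattern n k a} * (vandermonde fun i : Fin n => (i : ℤ)).det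
      = (vandermonde fun i => k i + i).det := by
  induction n with
  | zero => simp [card_isGTPattern_zero]
  | succ n ih =>
    have hl : Monotone fun i : Fin (n + 1) => k i + i :=
      fun i j hij => add_le_add (hk hij) (by exact_mod_cast hij)
    rw [card_isGTPattern_succ, det_vandermonde_id_succ, ← factorial_mul_sum_det_vandermonde _ hl,
      ← sum_interlacingRows_det_vandermonde, Nat.cast_sum, sum_mul, mul_sum]
    refine sum_congr rfl fun m hm => ?_
    rw [← ih m (hk.of_mem_interlacingRows hm)]
    ring

theorem stmt_1_general (n : ℕ) (k : Fin n → ℤ) (hk : Monotone k) :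
    ((Set.ncard {a : ℕ → ℕ → ℤ | IsGTPattern n k a}) : ℚ)
      = ∏ p ∈ Finset.univ.filter (fun p : Fin n × Fin n => p.1 < p.2),
          (((k p.2 : ℤ) : ℚ) - ((k p.1 : ℤ) : ℚ) + (((p.2 : ℕ) : ℚ) - ((p.1 : ℕ) : ℚ)))
            / (((p.2 : ℕ) : ℚ) - ((p.1 : ℕ) : ℚ)) := by
  have hρ : ((vandermonde fun i : Fin n => (i : ℤ)).det : ℚ) ≠ 0 :=
    Int.cast_ne_zero.mpr <| det_vandermonde_ne_zero_iff.mpr fun i j h =>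
      Fin.ext (by exact_mod_cast h)
  have hnum : ∏ p ∈ univ.filter (fun p : Fin n × Fin n => p.1 < p.2),
      ((k p.2 : ℚ) - k p.1 + ((p.2 : ℕ) - (p.1 : ℕ) : ℚ))
        = ((vandermonde fun i => k i + (i : ℤ)).det : ℚ) := by
    rw [cast_det_vandermonde_eq_prod]
    exact prod_congr rfl fun p _ => by push_cast; ring
  have hden : ∏ p ∈ univ.filter (fun p : Fin n × Fin n => p.1 < p.2), ((p.2 : ℕ) - (p.1 : ℕ) : ℚ)
      = ((vandermonde fun i : Fin n => (i : ℤ)).det : ℚ) := by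
    rw [cast_det_vandermonde_eq_prod]
    push_cast
    rfl
  rw [prod_div_distrib, hnum, hden, eq_div_iff hρ, ← card_isGTPattern_mul_det_vandermonde n k hk,
    ← Nat.card_coe_set_eq]
  push_cast
  rfl

/-- the number of Gelfand–Tsetlin patterns with bottom row (k_1,…,k_n),
k_1 ≤ … ≤ k_n, equals ∏_{1≤i<j≤n} (k_j - k_i + j - i)/(j - i). -/
theorem stmt_1 (n : ℕ) (hn : 1 ≤ n) (k : Fin n → ℤ) (hk : Monotone k) :
    ((Set.ncard {a : ℕ → ℕ → ℤ | IsGTPattern n k a}) : ℚ)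
      = ∏ p ∈ Finset.univ.filter (fun p : Fin n × Fin n => p.1 < p.2),
          (((k p.2 : ℤ) : ℚ) - ((k p.1 : ℤ) : ℚ) + (((p.2 : ℕ) : ℚ) - ((p.1 : ℕ) : ℚ)))
            / (((p.2 : ℕ) : ℚ) - ((p.1 : ℕ) : ℚ)) :=
  stmt_1_general n k hk
end

section
/- For integers k_1,…,k_n, the determinant det_{1≤i,j≤n} pbinom(k_i, j-1) equals P^{binom(n,2)} * ∏_{1≤i<j≤n} (P^{k_j} - P^{k_i})/(P^j - P^i), as an identity of rational functions in P. -/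
/-- The P-binomial (Gaussian binomial) coefficient, P = RatFunc.X. -/
noncomputable def pbinom (x : ℤ) (m : ℕ) : RatFunc ℚ :=
  (∏ i ∈ Finset.range m, (1 - RatFunc.X ^ (x - i)))
    / (∏ i ∈ Finset.range m, (1 - RatFunc.X ^ ((i : ℤ) + 1)))

/-!
Since `q ^ x - q ^ t = -q ^ t * (1 - q ^ (x - t))`, the entry in column `j` is a scalar
`c_j` times the monic polynomial `∏_{t < j} (Y - q ^ t)` evaluated at `Y = q ^ (k i)`.
Column operations reduce the determinant to `∏ c_j` times the Vandermonde determinant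
`∏_{i < j} (q ^ (k j) - q ^ (k i))`, and reflecting the denominator of `c_j` gives
`c_j = q ^ j / ∏_{i < j} (q ^ (j + 1) - q ^ (i + 1))`, whose product over `j` is the scalar
`q ^ (n choose 2) / ∏_{i < j} (q ^ (j + 1) - q ^ (i + 1))` of the claim.
-/

open Finset Polynomial

section PairProducts

variable {M : Type*} [CommMonoid M] {n : ℕ}

theorem prod_filter_lt_eq_prod_Ioi (f : Fin n → Fin n → M) :
    ∏ p ∈ univ.filter (fun p : Fin n × Fin n => p.1 < p.2), f p.1 p.2
      = ∏ i, ∏ j ∈ Ioi i, f i j := by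
  simp only [prod_filter, Fintype.prod_prod_type, ← filter_lt_eq_Ioi]

theorem prod_filter_lt_eq_prod_Iio (f : Fin n → Fin n → M) :
    ∏ p ∈ univ.filter (fun p : Fin n × Fin n => p.1 < p.2), f p.1 p.2
      = ∏ j, ∏ i ∈ Iio j, f i j := by
  simp only [prod_filter, Fintype.prod_prod_type, ← filter_gt_eq_Iio]
  exact prod_comm

theorem Fin.prod_Iio_eq_prod_range (f : ℕ → M) (j : Fin n) :
    ∏ i ∈ Iio j, f i = ∏ t ∈ range j, f t := by
  rw [← Nat.Iio_eq_range, ← Fin.map_valEmbedding_Iio, prod_map]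
  rfl

end PairProducts

theorem Matrix.det_mul_prod_range_sub {R : Type*} [CommRing R] {n : ℕ} (c : Fin n → R)
    (b : ℕ → R) (v : Fin n → R) :
    (Matrix.of fun i j : Fin n => c j * ∏ t ∈ range j, (v i - b t)).det
      = (∏ j, c j) * ∏ i, ∏ j ∈ Ioi i, (v j - v i) := by
  nontriviality R
  have hmonic : (Matrix.of fun i j : Fin n => ∏ t ∈ range j, (v i - b t)).det
      = (Matrix.vandermonde v).det := by
    rw [det_eval_matrixOfPolynomials_eq_det_vandermonde v (fun j => ∏ t ∈ range j, (X - C (b t)))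
      (fun j => by simp) (fun j => monic_prod_X_sub_C _ _)]
    simp only [eval_prod, eval_sub, eval_X, eval_C]
  rw [← det_vandermonde, ← hmonic]
  exact det_mul_row c (of fun i j : Fin n => ∏ t ∈ range j, (v i - b t))

section QBinomial

variable {K : Type*} [Field K] {q : K}

def qBinom (q : K) (x : ℤ) (m : ℕ) : K :=
  (∏ i ∈ range m, (1 - q ^ (x - i))) / ∏ i ∈ range m, (1 - q ^ ((i : ℤ) + 1))

theorem zpow_sub_zpow_eq_neg_zpow_mul (hq : q ≠ 0) (a b : ℤ) :
    q ^ a - q ^ b = -q ^ b * (1 - q ^ (a - b)) := by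
  rw [zpow_sub₀ hq]
  field_simp
  ring

theorem prod_range_zpow_sub_zpow (hq : q ≠ 0) (x : ℤ) (m : ℕ) :
    ∏ t ∈ range m, (q ^ x - q ^ (t : ℤ))
      = (∏ t ∈ range m, -q ^ (t : ℤ)) * ∏ t ∈ range m, (1 - q ^ (x - t)) := by
  rw [← prod_mul_distrib]
  exact prod_congr rfl fun t _ => zpow_sub_zpow_eq_neg_zpow_mul hq x t

theorem prod_range_zpow_succ_sub_zpow_succ (hq : q ≠ 0) (m : ℕ) :
    ∏ t ∈ range m, (q ^ ((m : ℤ) + 1) - q ^ ((t : ℤ) + 1))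
      = q ^ m * (∏ t ∈ range m, -q ^ (t : ℤ)) * ∏ t ∈ range m, (1 - q ^ ((t : ℤ) + 1)) := by
  have hreflect : ∏ t ∈ range m, (1 - q ^ ((m : ℤ) - t))
      = ∏ t ∈ range m, (1 - q ^ ((t : ℤ) + 1)) := by
    rw [← prod_range_reflect]
    refine prod_congr rfl fun t ht => ?_
    have htm := mem_range.mp ht
    congr 2
    omega
  rw [← hreflect, show q ^ m = ∏ _t ∈ range m, q by simp, ← prod_mul_distrib,
    ← prod_mul_distrib]
  refine prod_congr rfl fun t _ => ?_
  rw [zpow_sub_zpow_eq_neg_zpow_mul hq, add_sub_add_right_eq_sub, zpow_add_one₀ hq]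
  ring

-- If some `1 - q ^ (i + 1)` vanishes, both sides are `0` by the convention `a / 0 = 0`.
theorem qBinom_eq_div_mul_prod (hq : q ≠ 0) (x : ℤ) (m : ℕ) :
    qBinom q x m = q ^ m / (∏ t ∈ range m, (q ^ ((m : ℤ) + 1) - q ^ ((t : ℤ) + 1)))
      * ∏ t ∈ range m, (q ^ x - q ^ (t : ℤ)) := by
  have hneg : ∏ t ∈ range m, -q ^ (t : ℤ) ≠ 0 :=
    prod_ne_zero_iff.mpr fun t _ => neg_ne_zero.mpr (zpow_ne_zero _ hq)
  rw [qBinom, prod_range_zpow_succ_sub_zpow_succ hq, prod_range_zpow_sub_zpow hq,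
    div_mul_eq_mul_div, mul_assoc, mul_div_mul_left _ _ (pow_ne_zero m hq),
    mul_div_mul_left _ _ hneg]

theorem det_qBinom (hq : q ≠ 0) {n : ℕ} (k : Fin n → ℤ) :
    (Matrix.of fun i j : Fin n => qBinom q (k i) j).det
      = q ^ n.choose 2 *
        ∏ p ∈ univ.filter (fun p : Fin n × Fin n => p.1 < p.2),
          (q ^ k p.2 - q ^ k p.1) / (q ^ (((p.2 : ℕ) : ℤ) + 1) - q ^ (((p.1 : ℕ) : ℤ) + 1)) := by
  have hpow : ∏ j : Fin n, q ^ (j : ℕ) = q ^ n.choose 2 := by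
    rw [prod_pow_eq_pow_sum, Fin.sum_univ_eq_sum_range (fun j => j), sum_range_id,
      Nat.choose_two_right]
  simp_rw [qBinom_eq_div_mul_prod hq, Matrix.det_mul_prod_range_sub, prod_div_distrib,
    prod_filter_lt_eq_prod_Ioi (fun i j => q ^ k j - q ^ k i),
    prod_filter_lt_eq_prod_Iio (fun i j => q ^ (((j : ℕ) : ℤ) + 1) - q ^ (((i : ℕ) : ℤ) + 1)),
    ← Fin.prod_Iio_eq_prod_range, hpow]
  rw [div_mul_eq_mul_div, mul_div_assoc]

end QBinomial

/-- det_{1≤i,j≤n} pbinom(k_i, j-1)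
    = P^{binom(n,2)} ∏_{1≤i<j≤n} (P^{k_j} - P^{k_i})/(P^j - P^i).
    Rows/columns are indexed by Fin n (0-based, so column j corresponds to j-1). -/
theorem stmt_4 (n : ℕ) (k : Fin n → ℤ) :
    Matrix.det (Matrix.of fun i j : Fin n => pbinom (k i) (j : ℕ))
      = RatFunc.X ^ (n.choose 2) *
        ∏ p ∈ Finset.univ.filter (fun p : Fin n × Fin n => p.1 < p.2),
          (RatFunc.X ^ (k p.2) - RatFunc.X ^ (k p.1))
            / (RatFunc.X ^ (((p.2 : ℕ) : ℤ) + 1) - RatFunc.X ^ (((p.1 : ℕ) : ℤ) + 1)) :=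
  det_qBinom RatFunc.X_ne_zero k
end

section
/- For integers 1 ≤ l ≤ n, the product identity ∏_{1≤i<j≤n, i,j≠l} (j-i) / ∏_{1≤i<j≤n-1} (j-i) = binom(n-1, l-1) holds. -/
/-!
Write `V s = ∏_{i<j in s} (j - i)`. Adding a point `a` to `s` multiplies `V` by
`∏_{i ∈ s} |a - i|`, which for `s ∪ {l} = {1, …, n}` is `(l - 1)! (n - l)!`. Applying this once
with `l` and once with `n` gives two expressions for `V {1, …, n}`, whose comparison yields
`(n - 1)! / ((l - 1)! (n - l)!)`.
-/
open Finset Nat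

section NatCastProducts

variable {R : Type*} [CommRing R]

lemma prod_range_natCast_add_one (n : ℕ) : ∏ k ∈ range n, ((k : R) + 1) = n ! := by
  rw [← prod_range_add_one_eq_factorial]
  push_cast
  rfl

lemma prod_Ico_natCast_sub (a b : ℕ) : ∏ i ∈ Ico a b, ((b : R) - i) = (b - a)! := by
  rw [prod_Ico_eq_prod_range, ← prod_range_reflect, ← prod_range_natCast_add_one]
  refine prod_congr rfl fun k hk => ?_
  have hb : ((a + (b - a - 1 - k) + (k + 1) : ℕ) : R) = b := by
    congr 1
    grind
  rw [← hb]
  push_cast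
  ring

lemma prod_Ioc_natCast_sub (a b : ℕ) : ∏ j ∈ Ioc a b, ((j : R) - a) = (b - a)! := by
  rw [← Ico_add_one_add_one_eq_Ioc, prod_Ico_eq_prod_range, Nat.add_sub_add_right,
    ← prod_range_natCast_add_one]
  refine prod_congr rfl fun k _ => ?_
  push_cast
  ring

end NatCastProducts

section LtPairs

variable {α M : Type*} [LinearOrder α] [CommMonoid M]

def ltPairs (s : Finset α) : Finset (α × α) := (s ×ˢ s).filter fun p => p.1 < p.2

lemma ltPairs_erase (s : Finset α) (a : α) :
    (s ×ˢ s).filter (fun p => p.1 < p.2 ∧ p.1 ≠ a ∧ p.2 ≠ a) = ltPairs (s.erase a) := by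
  ext ⟨i, j⟩
  simp only [ltPairs, mem_filter, mem_product, mem_erase]
  tauto

lemma ltPairs_insert (a : α) (t : Finset α) :
    ltPairs (insert a t) = ltPairs t ∪ (t.filter (· < a) ×ˢ {a} ∪ {a} ×ˢ t.filter (a < ·)) := by
  ext ⟨i, j⟩
  simp only [ltPairs, mem_filter, mem_product, mem_insert, mem_union, mem_singleton]
  grind

lemma prod_ltPairs_insert {a : α} {t : Finset α} (ha : a ∉ t) (f : α × α → M) :
    ∏ p ∈ ltPairs (insert a t), f p
      = (∏ p ∈ ltPairs t, f p) *
          ((∏ i ∈ t.filter (· < a), f (i, a)) * ∏ j ∈ t.filter (a < ·), f (a, j)) := by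
  have h_ends : Disjoint (t.filter (· < a) ×ˢ {a}) ({a} ×ˢ t.filter (a < ·)) := by
    simp only [disjoint_left, mem_product, mem_filter, mem_singleton]
    grind
  have h_inner : Disjoint (ltPairs t) (t.filter (· < a) ×ˢ {a} ∪ {a} ×ˢ t.filter (a < ·)) := by
    simp only [ltPairs, disjoint_left, mem_product, mem_filter, mem_singleton, mem_union]
    grind
  rw [ltPairs_insert, prod_union h_inner, prod_union h_ends, product_singleton,
    singleton_product, prod_map, prod_map]
  rfl

end LtPairs

lemma prod_ltPairs_Icc_erase_mul (R : Type*) [CommRing R] {n l : ℕ} (hl : l ∈ Icc 1 n) :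
    (∏ p ∈ ltPairs ((Icc 1 n).erase l), ((p.2 : R) - p.1)) * ((l - 1)! * (n - l)!)
      = ∏ p ∈ ltPairs (Icc 1 n), ((p.2 : R) - p.1) := by
  have h_below : ((Icc 1 n).erase l).filter (· < l) = Ico 1 l := by
    ext i; simp only [mem_filter, mem_erase, mem_Icc, mem_Ico]; grind
  have h_above : ((Icc 1 n).erase l).filter (l < ·) = Ioc l n := by
    ext i; simp only [mem_filter, mem_erase, mem_Icc, mem_Ioc]; grind
  conv_rhs => rw [← insert_erase hl, prod_ltPairs_insert (notMem_erase l _)]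
  rw [h_below, h_above, prod_Ico_natCast_sub, prod_Ioc_natCast_sub]

/-- ∏_{1≤i<j≤n, i,j≠l} (j-i) / ∏_{1≤i<j≤n-1} (j-i) = binom(n-1, l-1). -/
theorem stmt_9 (n l : ℕ) (hl : 1 ≤ l) (hln : l ≤ n) :
    (∏ p ∈ (Finset.Icc 1 n ×ˢ Finset.Icc 1 n).filter
        (fun p : ℕ × ℕ => p.1 < p.2 ∧ p.1 ≠ l ∧ p.2 ≠ l), ((p.2 : ℚ) - (p.1 : ℚ)))
      / (∏ p ∈ (Finset.Icc 1 (n - 1) ×ˢ Finset.Icc 1 (n - 1)).filter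
        (fun p : ℕ × ℕ => p.1 < p.2), ((p.2 : ℚ) - (p.1 : ℚ)))
    = (n - 1).choose (l - 1) := by
  have h_num := prod_ltPairs_Icc_erase_mul ℚ (mem_Icc.mpr ⟨hl, hln⟩)
  have h_den := prod_ltPairs_Icc_erase_mul ℚ (mem_Icc.mpr ⟨hl.trans hln, le_rfl⟩)
  have h_den_ne : ∏ p ∈ ltPairs (Icc 1 (n - 1)), ((p.2 : ℚ) - p.1) ≠ 0 :=
    prod_ne_zero_iff.mpr fun p hp => sub_ne_zero.mpr <| by
      exact_mod_cast ((mem_filter.mp hp).2).ne'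
  have h_top : (Icc 1 n).erase n = Icc 1 (n - 1) := by
    ext i; simp only [mem_erase, mem_Icc]; omega
  rw [h_top, Nat.sub_self, factorial_zero, Nat.cast_one, mul_one] at h_den
  rw [ltPairs_erase, ← ltPairs.eq_1, Nat.cast_choose ℚ (by omega : l - 1 ≤ n - 1),
    div_eq_div_iff h_den_ne (by positivity), show n - 1 - (l - 1) = n - l by omega]
  linear_combination h_num - h_den
end

section
/- For any strictly increasing integer sequence k_1 < … < k_n, the signed sum over all {(0,0)}-triangles with bottom row (k_1,…,k_n) with weight (-1)^{number of special entries} equals the number of monotone triangles with bottom row (k_1,…,k_n). -/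
/-- A monotone triangle with n rows, encoded 0-based (row 0 is the bottom row, entries
`a i j` for i ≤ j ≤ n-1); entries outside the array are normalized to 0. -/
def IsMonotoneTriangle (n : ℕ) (k : Fin n → ℤ) (a : ℕ → ℕ → ℤ) : Prop :=
  (∀ i j : ℕ, ¬(i ≤ j ∧ j < n) → a i j = 0) ∧
  (∀ j : Fin n, a 0 (j : ℕ) = k j) ∧
  (∀ i j : ℕ, i + 1 ≤ j → j ≤ n - 1 → a i (j - 1) ≤ a (i + 1) j ∧ a (i + 1) j ≤ a i j) ∧
  (∀ i j : ℕ, i ≤ j → j + 2 ≤ n → a i j < a i (j + 1))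

/-- A {(0,0)}-triangle with bottom row k: a triangular array `a` (0-based as above)
together with a set M of non-row-adjacent special inner entries; a special entry equals
both of its parents (its two neighbours in the row above), and every entry not in the
bottom row which is not a parent of a special entry lies weakly between its two bottom
neighbours. -/
def Is00Triangle (n : ℕ) (k : Fin n → ℤ) (a : ℕ → ℕ → ℤ) (M : Finset (ℕ × ℕ)) : Prop :=
  (∀ i j : ℕ, ¬(i ≤ j ∧ j < n) → a i j = 0) ∧
  (∀ j : Fin n, a 0 (j : ℕ) = k j) ∧
  (∀ p ∈ M, p.1 < p.2 ∧ p.2 + 2 ≤ n) ∧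
  (∀ p ∈ M, (p.1, p.2 + 1) ∉ M) ∧
  (∀ p ∈ M, a (p.1 + 1) p.2 = a p.1 p.2 ∧ a (p.1 + 1) (p.2 + 1) = a p.1 p.2) ∧
  (∀ i j : ℕ, i + 1 ≤ j → j ≤ n - 1 → (i, j - 1) ∉ M → (i, j) ∉ M →
    a i (j - 1) ≤ a (i + 1) j ∧ a (i + 1) j ≤ a i j)

open scoped Classical

/-!
Sign-reversing involution. Rows of a {(0,0)}-triangle are weakly increasing, by induction from
the strictly increasing bottom row (a special entry equals its parents). Call two equal
neighbours in a row a tie, and take the leftmost tie in the lowest row containing one. The row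
below it is strictly increasing, which forces the entry below the left tied entry to equal both
tied entries and its row neighbours not to be special; so this entry may be toggled in or out of
the special set. The toggle changes the sign and is an involution, and the tie-free triangles
left over have no special entries: they are exactly the monotone triangles.
-/

variable {n : ℕ} {k : Fin n → ℤ} {a : ℕ → ℕ → ℤ} {M : Finset (ℕ × ℕ)}

def IsTie (n : ℕ) (a : ℕ → ℕ → ℤ) (r j : ℕ) : Prop :=
  r ≤ j ∧ j + 2 ≤ n ∧ a r j = a r (j + 1)

def HasTie (n : ℕ) (a : ℕ → ℕ → ℤ) : Prop :=
  ∃ r j, IsTie n a r j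

noncomputable def firstTieRow (n : ℕ) (a : ℕ → ℕ → ℤ) : ℕ :=
  sInf {r | ∃ j, IsTie n a r j}

noncomputable def firstTieCol (n : ℕ) (a : ℕ → ℕ → ℤ) : ℕ :=
  sInf {j | IsTie n a (firstTieRow n a) j}

noncomputable def togglePos (n : ℕ) (a : ℕ → ℕ → ℤ) : ℕ × ℕ :=
  (firstTieRow n a - 1, firstTieCol n a)

noncomputable def toggle (n : ℕ) (x : (ℕ → ℕ → ℤ) × Finset (ℕ × ℕ)) :
    (ℕ → ℕ → ℤ) × Finset (ℕ × ℕ) :=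
  (x.1, if togglePos n x.1 ∈ x.2 then x.2.erase (togglePos n x.1)
    else insert (togglePos n x.1) x.2)

lemma toggle_toggle (x : (ℕ → ℕ → ℤ) × Finset (ℕ × ℕ)) : toggle n (toggle n x) = x := by
  by_cases hx : togglePos n x.1 ∈ x.2 <;> simp [toggle, hx]

lemma toggle_ne (x : (ℕ → ℕ → ℤ) × Finset (ℕ × ℕ)) : toggle n x ≠ x := by
  intro h
  have h2 := congrArg Prod.snd h
  by_cases hx : togglePos n x.1 ∈ x.2 <;> simp only [toggle, hx, if_true, if_false] at h2
  · exact Finset.notMem_erase _ _ (h2 ▸ hx)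
  · exact hx (h2 ▸ Finset.mem_insert_self _ _)

lemma neg_one_pow_card_toggle (x : (ℕ → ℕ → ℤ) × Finset (ℕ × ℕ)) :
    (-1 : ℤ) ^ (toggle n x).2.card = -(-1) ^ x.2.card := by
  by_cases hx : togglePos n x.1 ∈ x.2
  · rw [← Finset.card_erase_add_one hx]
    simp [toggle, hx, pow_succ]
  · simp [toggle, hx, Finset.card_insert_of_notMem, pow_succ]

namespace IsMonotoneTriangle

lemma is00Triangle (h : IsMonotoneTriangle n k a) : Is00Triangle n k a ∅ :=
  ⟨h.1, h.2.1, by simp, by simp, by simp, fun i j hij hj _ _ => h.2.2.1 i j hij hj⟩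

lemma not_hasTie (h : IsMonotoneTriangle n k a) : ¬ HasTie n a :=
  fun ⟨r, j, hr, hj, he⟩ => (h.2.2.2 r j hr hj).ne he

end IsMonotoneTriangle

namespace Is00Triangle

lemma bottom_lt (hk : StrictMono k) (h : Is00Triangle n k a M) {j : ℕ} (hj : j + 2 ≤ n) :
    a 0 j < a 0 (j + 1) := by
  have e₀ : a 0 j = k ⟨j, by omega⟩ := h.2.1 ⟨j, by omega⟩
  have e₁ : a 0 (j + 1) = k ⟨j + 1, by omega⟩ := h.2.1 ⟨j + 1, by omega⟩
  rw [e₀, e₁]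
  exact hk (Fin.mk_lt_mk.mpr (Nat.lt_succ_self j))

lemma between_of_monotone_row (h : Is00Triangle n k a M) {i : ℕ}
    (hrow : ∀ j, i ≤ j → j + 2 ≤ n → a i j ≤ a i (j + 1)) {j : ℕ} (hij : i ≤ j)
    (hj : j + 2 ≤ n) : a i j ≤ a (i + 1) (j + 1) ∧ a (i + 1) (j + 1) ≤ a i (j + 1) := by
  obtain ⟨-, -, -, -, hspecial, hbetween⟩ := h
  by_cases hl : (i, j) ∈ M
  · have e := (hspecial _ hl).2
    exact ⟨e.ge, e ▸ hrow j hij hj⟩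
  by_cases hr : (i, j + 1) ∈ M
  · have e := (hspecial _ hr).1
    exact ⟨e ▸ hrow j hij hj, e.le⟩
  simpa using hbetween i (j + 1) (by omega) (by omega) (by simpa using hl) hr

lemma monotone_row (hk : StrictMono k) (h : Is00Triangle n k a M) :
    ∀ i j, i ≤ j → j + 2 ≤ n → a i j ≤ a i (j + 1)
  | 0, _, _, hj => (h.bottom_lt hk hj).le
  | i + 1, j + 1, hij, hj =>
    have hrow := monotone_row hk h i
    (h.between_of_monotone_row hrow (by omega) (by omega)).2.trans
      (h.between_of_monotone_row hrow (by omega) hj).1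
  | _ + 1, 0, hij, _ => absurd hij (by omega)

lemma between (hk : StrictMono k) (h : Is00Triangle n k a M) {i j : ℕ} (hij : i ≤ j)
    (hj : j + 2 ≤ n) : a i j ≤ a (i + 1) (j + 1) ∧ a (i + 1) (j + 1) ≤ a i (j + 1) :=
  h.between_of_monotone_row (h.monotone_row hk i) hij hj

lemma mem_Icc (hk : StrictMono k) (h : Is00Triangle n k a M) :
    ∀ i j (hij : i ≤ j) (hj : j < n), a i j ∈ Set.Icc (k ⟨j - i, by omega⟩) (k ⟨j, hj⟩)
  | 0, j, _, hj => by
    have e : a 0 j = k ⟨j, hj⟩ := h.2.1 ⟨j, hj⟩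
    simp [e]
  | i + 1, j + 1, hij, hj => by
    have hb := h.between hk (i := i) (j := j) (by omega) (by omega)
    have hl := (mem_Icc hk h i j (by omega) (by omega)).1
    have hr := (mem_Icc hk h i (j + 1) (by omega) hj).2
    exact ⟨by simpa using hl.trans hb.1, hb.2.trans hr⟩
  | _ + 1, 0, hij, _ => absurd hij (by omega)

lemma between_sub_one (hk : StrictMono k) (h : Is00Triangle n k a M) {i j : ℕ} (hij : i + 1 ≤ j)
    (hj : j ≤ n - 1) : a i (j - 1) ≤ a (i + 1) j ∧ a (i + 1) j ≤ a i j := by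
  obtain ⟨j, rfl⟩ : ∃ j', j = j' + 1 := ⟨j - 1, by omega⟩
  simpa using h.between hk (i := i) (j := j) (by omega) (by omega)

/-- Rows being weakly increasing, the interlacing clause holds for any set of special entries. -/
lemma of_subset (hk : StrictMono k) (h : Is00Triangle n k a M) {M' : Finset (ℕ × ℕ)}
    (hM : M' ⊆ M) : Is00Triangle n k a M' :=
  ⟨h.1, h.2.1, fun p hp => h.2.2.1 p (hM hp), fun p hp hq => h.2.2.2.1 p (hM hp) (hM hq),
    fun p hp => h.2.2.2.2.1 p (hM hp), fun _ _ hij hj _ _ => h.between_sub_one hk hij hj⟩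

lemma insert (hk : StrictMono k) (h : Is00Triangle n k a M) {i j : ℕ} (hij : i < j)
    (hj : j + 2 ≤ n) (hl : (i, j - 1) ∉ M) (hr : (i, j + 1) ∉ M)
    (e₁ : a (i + 1) j = a i j) (e₂ : a (i + 1) (j + 1) = a i j) :
    Is00Triangle n k a (insert (i, j) M) := by
  refine ⟨h.1, h.2.1, ?_, ?_, ?_, fun _ _ hij hj _ _ => h.between_sub_one hk hij hj⟩
  all_goals obtain ⟨-, -, hrange, hsep, hspecial, -⟩ := h
  · simp only [Finset.mem_insert, forall_eq_or_imp]
    exact ⟨⟨hij, hj⟩, hrange⟩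
  · simp only [Finset.mem_insert, forall_eq_or_imp, Prod.mk.injEq, not_or]
    refine ⟨⟨by omega, hr⟩, fun p hp => ⟨?_, hsep p hp⟩⟩
    rintro ⟨rfl, hpj⟩
    exact hl (by rwa [← hpj, Nat.add_sub_cancel])
  · simp only [Finset.mem_insert, forall_eq_or_imp]
    exact ⟨⟨e₁, e₂⟩, hspecial⟩

lemma row_lt_of_not_isTie (hk : StrictMono k) (h : Is00Triangle n k a M) {i : ℕ}
    (hno : ∀ j, ¬ IsTie n a i j) : ∀ j, i ≤ j → j + 2 ≤ n → a i j < a i (j + 1) :=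
  fun j hij hj => (h.monotone_row hk i j hij hj).lt_of_ne fun he => hno j ⟨hij, hj, he⟩

lemma isTie_of_mem (h : Is00Triangle n k a M) {p : ℕ × ℕ} (hp : p ∈ M) :
    IsTie n a (p.1 + 1) p.2 := by
  obtain ⟨hlt, hj⟩ := h.2.2.1 p hp
  obtain ⟨e₁, e₂⟩ := h.2.2.2.2.1 p hp
  exact ⟨hlt, hj, e₁.trans e₂.symm⟩

lemma eq_empty_of_not_hasTie (h : Is00Triangle n k a M) (hno : ¬ HasTie n a) : M = ∅ :=
  Finset.eq_empty_of_forall_notMem fun _ hp => hno ⟨_, _, h.isTie_of_mem hp⟩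

lemma isMonotoneTriangle_of_not_hasTie (hk : StrictMono k) (h : Is00Triangle n k a M)
    (hno : ¬ HasTie n a) : IsMonotoneTriangle n k a :=
  ⟨h.1, h.2.1, fun _ _ hij hj => h.between_sub_one hk hij hj,
    fun i => h.row_lt_of_not_isTie hk fun j ht => hno ⟨i, j, ht⟩⟩

lemma eq_of_isTie_succ (hk : StrictMono k) (h : Is00Triangle n k a M) {i j : ℕ}
    (hrow : ∀ j, i ≤ j → j + 2 ≤ n → a i j < a i (j + 1)) (ht : IsTie n a (i + 1) j) :
    a (i + 1) j = a i j ∧ a (i + 1) (j + 1) = a i j ∧ (i, j - 1) ∉ M ∧ (i, j + 1) ∉ M := by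
  obtain ⟨hij, hj, he⟩ := ht
  obtain ⟨j, rfl⟩ : ∃ j', j = j' + 1 := ⟨j - 1, by omega⟩
  have hb₁ := h.between hk (i := i) (j := j) (by omega) (by omega)
  have hb₂ := h.between hk (i := i) (j := j + 1) (by omega) hj
  have hlt₁ := hrow j (by omega) (by omega)
  have hlt₂ := hrow (j + 1) (by omega) hj
  have e : a (i + 1) (j + 1) = a i (j + 1) := le_antisymm hb₁.2 (he ▸ hb₂.1)
  refine ⟨e, he ▸ e, fun hl => ?_, fun hr => ?_⟩
  · have := (h.2.2.2.2.1 _ hl).2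
    simp only [Nat.add_sub_cancel] at this
    omega
  · have := (h.2.2.2.2.1 _ hr).1
    linarith

lemma exists_togglePos (hk : StrictMono k) (h : Is00Triangle n k a M) (ht : HasTie n a) :
    ∃ i j, togglePos n a = (i, j) ∧ IsTie n a (i + 1) j ∧
      ∀ j, i ≤ j → j + 2 ≤ n → a i j < a i (j + 1) := by
  have hrow : ∃ j, IsTie n a (firstTieRow n a) j := Nat.sInf_mem ht
  have hcol : IsTie n a (firstTieRow n a) (firstTieCol n a) := Nat.sInf_mem hrow
  obtain ⟨i, hi⟩ : ∃ i, firstTieRow n a = i + 1 := by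
    refine Nat.exists_eq_add_one.mpr (Nat.pos_of_ne_zero fun h0 => ?_)
    obtain ⟨j, -, hj, he⟩ := h0 ▸ hrow
    exact (h.bottom_lt hk hj).ne he
  refine ⟨i, _, by simp [togglePos, hi], hi ▸ hcol, h.row_lt_of_not_isTie hk fun j ht => ?_⟩
  exact Nat.notMem_of_lt_sInf (s := {r | ∃ j, IsTie n a r j}) (m := i)
    (by rw [← firstTieRow, hi]; omega) ⟨j, ht⟩

lemma toggle_of_hasTie (hk : StrictMono k) {x : (ℕ → ℕ → ℤ) × Finset (ℕ × ℕ)}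
    (h : Is00Triangle n k x.1 x.2) (ht : HasTie n x.1) :
    Is00Triangle n k (toggle n x).1 (toggle n x).2 := by
  obtain ⟨i, j, hpos, htie, hrow⟩ := h.exists_togglePos hk ht
  obtain ⟨e₁, e₂, hl, hr⟩ := h.eq_of_isTie_succ hk hrow htie
  simp only [toggle, hpos]
  split_ifs
  · exact h.of_subset hk (Finset.erase_subset _ _)
  · exact h.insert hk (by have := htie.1; omega) htie.2.1 hl hr e₁ e₂

end Is00Triangle

lemma finite_setOf_is00Triangle (hk : StrictMono k) :
    {x : (ℕ → ℕ → ℤ) × Finset (ℕ × ℕ) | Is00Triangle n k x.1 x.2}.Finite := by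
  let t : Fin n × Fin n → Set ℤ := fun p => insert 0 (Set.Icc (k ⟨p.2 - p.1, by omega⟩) (k p.2))
  refine Set.Finite.of_injOn (f := fun x => (fun p : Fin n × Fin n => x.1 p.1 p.2, x.2))
    (t := Set.univ.pi t ×ˢ ↑(Finset.range n ×ˢ Finset.range n).powerset) ?_ ?_ ?_
  · intro x hx
    refine ⟨fun p _ => ?_, Finset.mem_coe.mpr (Finset.mem_powerset.mpr fun p hp => ?_)⟩
    · by_cases hp : (p.1 : ℕ) ≤ p.2
      · exact Set.mem_insert_of_mem _ (hx.mem_Icc hk _ _ hp p.2.isLt)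
      · exact Set.mem_insert_iff.mpr (Or.inl (hx.1 _ _ fun h => hp h.1))
    · obtain ⟨h₁, h₂⟩ := hx.2.2.1 p hp
      simp only [Finset.mem_product, Finset.mem_range]
      omega
  · intro x hx y hy hxy
    simp only [Prod.mk.injEq] at hxy
    refine Prod.ext (funext₂ fun i j => ?_) hxy.2
    by_cases hij : i ≤ j ∧ j < n
    · exact congrFun hxy.1 (⟨i, by omega⟩, ⟨j, hij.2⟩)
    · rw [hx.1 i j hij, hy.1 i j hij]
  · exact (Set.Finite.pi fun p => (Set.finite_Icc _ _).insert 0).prod (Finset.finite_toSet _)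

noncomputable def signedWeight (n : ℕ) (k : Fin n → ℤ) (x : (ℕ → ℕ → ℤ) × Finset (ℕ × ℕ)) : ℤ :=
  if Is00Triangle n k x.1 x.2 then (-1 : ℤ) ^ x.2.card else 0

lemma sum_signedWeight_filter_hasTie (hk : StrictMono k) :
    ∑ x ∈ (finite_setOf_is00Triangle hk).toFinset with HasTie n x.1, signedWeight n k x = 0 := by
  have mem_iff (x) : x ∈ (finite_setOf_is00Triangle hk).toFinset.filter (fun x => HasTie n x.1) ↔
      Is00Triangle n k x.1 x.2 ∧ HasTie n x.1 := by simp
  refine Finset.sum_involution (fun x _ => toggle n x) (fun x hx => ?_) (fun x _ _ => toggle_ne x)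
    (fun x hx => ?_) (fun x _ => toggle_toggle x)
  · obtain ⟨h, ht⟩ := (mem_iff x).mp hx
    rw [signedWeight, signedWeight, if_pos h, if_pos (h.toggle_of_hasTie hk ht),
      neg_one_pow_card_toggle, add_neg_cancel]
  · obtain ⟨h, ht⟩ := (mem_iff x).mp hx
    exact (mem_iff _).mpr ⟨h.toggle_of_hasTie hk ht, ht⟩

lemma sum_signedWeight_filter_not_hasTie (hk : StrictMono k) :
    ∑ x ∈ (finite_setOf_is00Triangle hk).toFinset with ¬ HasTie n x.1, signedWeight n k x =
      {a | IsMonotoneTriangle n k a}.ncard := by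
  have mem_iff (x) :
      x ∈ (finite_setOf_is00Triangle hk).toFinset.filter (fun x => ¬ HasTie n x.1) ↔
        Is00Triangle n k x.1 x.2 ∧ ¬ HasTie n x.1 := by simp
  have weight_eq_one : ∀ x ∈ (finite_setOf_is00Triangle hk).toFinset.filter
      (fun x => ¬ HasTie n x.1), signedWeight n k x = 1 := fun x hx => by
    obtain ⟨h, ht⟩ := (mem_iff x).mp hx
    rw [signedWeight, if_pos h, h.eq_empty_of_not_hasTie ht, Finset.card_empty, pow_zero]
  rw [Finset.sum_congr rfl weight_eq_one, Finset.sum_const, nsmul_one, ← Set.ncard_coe_finset]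
  congr 1
  refine (Set.ncard_congr (fun a _ => (a, ∅)) (fun a ha => (mem_iff _).mpr
    ⟨ha.is00Triangle, ha.not_hasTie⟩) (fun a b _ _ hab => congrArg Prod.fst hab)
    (fun x hx => ?_)).symm
  obtain ⟨h, ht⟩ := (mem_iff x).mp hx
  exact ⟨x.1, h.isMonotoneTriangle_of_not_hasTie hk ht,
    Prod.ext rfl (h.eq_empty_of_not_hasTie ht).symm⟩

theorem stmt_16_general (n : ℕ) (k : Fin n → ℤ) (hk : StrictMono k) :
    (∑ᶠ x : (ℕ → ℕ → ℤ) × Finset (ℕ × ℕ),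
        (if Is00Triangle n k x.1 x.2 then (-1 : ℤ) ^ x.2.card else 0))
      = (Set.ncard {a : ℕ → ℕ → ℤ | IsMonotoneTriangle n k a} : ℤ) := by
  have hsupp : Function.support (signedWeight n k) ⊆ (finite_setOf_is00Triangle hk).toFinset :=
    fun x hx => by
      rw [Set.Finite.coe_toFinset]
      by_contra h
      exact hx (if_neg h)
  change ∑ᶠ x, signedWeight n k x = _
  rw [finsum_eq_sum_of_support_subset _ hsupp,
    ← Finset.sum_filter_add_sum_filter_not _ (fun x => HasTie n x.1),
    sum_signedWeight_filter_hasTie hk, sum_signedWeight_filter_not_hasTie hk, zero_add]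

/-- for k_1 < … < k_n, the signed sum over all {(0,0)}-triangles with bottom
row (k_1,…,k_n), weighted by (-1)^{#special entries}, equals the number of monotone
triangles with bottom row (k_1,…,k_n). -/
theorem stmt_16 (n : ℕ) (hn : 1 ≤ n) (k : Fin n → ℤ) (hk : StrictMono k) :
    (∑ᶠ x : (ℕ → ℕ → ℤ) × Finset (ℕ × ℕ),
        (if Is00Triangle n k x.1 x.2 then (-1 : ℤ) ^ x.2.card else 0))
      = (Set.ncard {a : ℕ → ℕ → ℤ | IsMonotoneTriangle n k a} : ℤ) :=
  stmt_16_general n k hk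
end
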